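/- arXiv:1604.01983 — 2 statements merged into one kernel-verified Lean document; each statement's English description precedes it below -/
import Mathlib

section
/- Let f2(x; β) be the exponential density with scale β > 0 and f1(x; σ) the half-normal density with scale σ > 0. Then the infimum over σ > 0 of D_KL(f2(·; β) ‖ f1(·; σ)) does not depend on β: it equals (log π − 1)/2 for every β > 0, and is attained at σ = β√2. -/
open MeasureTheory Real

/-- Kullback--Leibler divergence between two densities on `(0, ∞)` (i.e. `∫₀^∞`). -/
noncomputable def klDivPos (f g : ℝ → ℝ) : ℝ :=
  ∫ x in Set.Ioi (0:ℝ), f x * Real.log (f x / g x)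

/-- Half-normal density with scale `σ`. -/
noncomputable def halfNormalPdf (σ : ℝ) (x : ℝ) : ℝ :=
  (1 / σ) * Real.sqrt (2 / Real.pi) * Real.exp (-(x ^ 2) / (2 * σ ^ 2))

/-- Exponential density with scale `β`. -/
noncomputable def expPdf (β : ℝ) (x : ℝ) : ℝ :=
  (1 / β) * Real.exp (-x / β)

/-!
The log-likelihood ratio `log (f₂ / f₁)` is a quadratic polynomial in `x`, so the divergence only
involves the first two moments `β` and `2β²` of the exponential distribution. Writing
`s = σ² / (2β²)` this gives `D_KL = (log π - 1) / 2 + (log s + s⁻¹ - 1) / 2`, and the second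
term is nonnegative by `log s ≥ 1 - s⁻¹`, with equality at `s = 1`, i.e. `σ = β√2`.
-/

open Set
open scoped Nat

lemma integral_pow_mul_exp_neg_mul_Ioi {r : ℝ} (hr : 0 < r) (n : ℕ) :
    ∫ x in Ioi (0 : ℝ), x ^ n * exp (-(r * x)) = n ! / r ^ (n + 1) := by
  have h := integral_rpow_mul_exp_neg_mul_Ioi (a := n + 1) (by positivity) hr
  simp_rw [add_sub_cancel_right, rpow_natCast] at h
  rw [h, Gamma_nat_eq_factorial, ← Nat.cast_succ, rpow_natCast, Nat.succ_eq_add_one]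
  ring

lemma integrableOn_pow_mul_exp_neg_mul_Ioi {r : ℝ} (hr : 0 < r) (n : ℕ) :
    IntegrableOn (fun x => x ^ n * exp (-(r * x))) (Ioi 0) :=
  .of_integral_ne_zero (by rw [integral_pow_mul_exp_neg_mul_Ioi hr]; positivity)

lemma expPdf_mul_pow (β x : ℝ) (n : ℕ) :
    expPdf β x * x ^ n = β⁻¹ * (x ^ n * exp (-(β⁻¹ * x))) := by
  rw [expPdf, one_div, neg_div, div_eq_inv_mul]
  ring

section ExponentialMoments

variable {β : ℝ}

lemma integrableOn_expPdf_mul_pow (hβ : 0 < β) (n : ℕ) :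
    IntegrableOn (fun x => expPdf β x * x ^ n) (Ioi 0) := by
  simp_rw [expPdf_mul_pow]
  exact (integrableOn_pow_mul_exp_neg_mul_Ioi (inv_pos.2 hβ) n).const_mul _

lemma integral_expPdf_mul_pow (hβ : 0 < β) (n : ℕ) :
    ∫ x in Ioi (0 : ℝ), expPdf β x * x ^ n = n ! * β ^ n := by
  simp_rw [expPdf_mul_pow]
  rw [integral_const_mul, integral_pow_mul_exp_neg_mul_Ioi (inv_pos.2 hβ), inv_pow,
    div_inv_eq_mul, pow_succ]
  field_simp

lemma integral_expPdf_mul_quadratic (hβ : 0 < β) (a b c : ℝ) :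
    ∫ x in Ioi (0 : ℝ), expPdf β x * (a + b * x + c * x ^ 2) = a + b * β + 2 * c * β ^ 2 := by
  have hsplit : (fun x => expPdf β x * (a + b * x + c * x ^ 2)) = fun x =>
      a * (expPdf β x * x ^ 0) + b * (expPdf β x * x ^ 1) + c * (expPdf β x * x ^ 2) := by
    funext x; ring
  have hint (k : ℝ) (n : ℕ) : Integrable (fun x => k * (expPdf β x * x ^ n))
      (volume.restrict (Ioi 0)) :=
    (integrableOn_expPdf_mul_pow hβ n).const_mul k
  have hint01 : Integrable (fun x => a * (expPdf β x * x ^ 0) + b * (expPdf β x * x ^ 1))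
      (volume.restrict (Ioi 0)) :=
    (hint a 0).add (hint b 1)
  rw [hsplit, integral_add hint01 (hint c 2),
    integral_add (hint a 0) (hint b 1), integral_const_mul, integral_const_mul,
    integral_const_mul, integral_expPdf_mul_pow hβ, integral_expPdf_mul_pow hβ,
    integral_expPdf_mul_pow hβ]
  push_cast [Nat.factorial]
  ring

end ExponentialMoments

lemma log_expPdf {β : ℝ} (hβ : 0 < β) (x : ℝ) : log (expPdf β x) = -log β - x / β := by
  rw [expPdf, log_mul (by positivity) (exp_ne_zero _), log_exp, one_div, log_inv]
  ring

lemma log_halfNormalPdf {σ : ℝ} (hσ : 0 < σ) (x : ℝ) :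
    log (halfNormalPdf σ x) = log (2 / π) / 2 - log σ - x ^ 2 / (2 * σ ^ 2) := by
  have hπ := pi_pos
  rw [halfNormalPdf, log_mul (by positivity) (exp_ne_zero _),
    log_mul (by positivity) (by positivity), log_exp, one_div, log_inv,
    log_sqrt (by positivity)]
  ring

lemma klDivPos_expPdf_halfNormalPdf {β σ : ℝ} (hβ : 0 < β) (hσ : 0 < σ) :
    klDivPos (expPdf β) (halfNormalPdf σ) =
      (log π - 1) / 2 + (log (σ ^ 2 / (2 * β ^ 2)) + (σ ^ 2 / (2 * β ^ 2))⁻¹ - 1) / 2 := by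
  have hπ := pi_pos
  calc klDivPos (expPdf β) (halfNormalPdf σ)
      = ∫ x in Ioi (0 : ℝ), expPdf β x *
          ((log σ - log β - log (2 / π) / 2) + (-β⁻¹) * x + (2 * σ ^ 2)⁻¹ * x ^ 2) := by
        unfold klDivPos
        congr 1
        funext x
        have hf : expPdf β x ≠ 0 := by unfold expPdf; positivity
        have hg : halfNormalPdf σ x ≠ 0 := by unfold halfNormalPdf; positivity
        rw [log_div hf hg, log_expPdf hβ, log_halfNormalPdf hσ]
        ring
    _ = (log σ - log β - log (2 / π) / 2) + (-β⁻¹) * β + 2 * (2 * σ ^ 2)⁻¹ * β ^ 2 :=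
        integral_expPdf_mul_quadratic hβ _ _ _
    _ = _ := by
        rw [log_div two_ne_zero hπ.ne', log_div (by positivity) (by positivity),
          log_mul two_ne_zero (by positivity), log_pow, log_pow]
        field_simp
        ring

lemma le_klDivPos_expPdf_halfNormalPdf {β σ : ℝ} (hβ : 0 < β) (hσ : 0 < σ) :
    (log π - 1) / 2 ≤ klDivPos (expPdf β) (halfNormalPdf σ) := by
  have hs : 1 - (σ ^ 2 / (2 * β ^ 2))⁻¹ ≤ log (σ ^ 2 / (2 * β ^ 2)) :=
    one_sub_inv_le_log_of_pos (by positivity)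
  rw [klDivPos_expPdf_halfNormalPdf hβ hσ]
  linarith

lemma klDivPos_expPdf_halfNormalPdf_mul_sqrt_two {β : ℝ} (hβ : 0 < β) :
    klDivPos (expPdf β) (halfNormalPdf (β * √2)) = (log π - 1) / 2 := by
  have hs : (β * √2) ^ 2 / (2 * β ^ 2) = 1 := by
    rw [mul_pow, sq_sqrt zero_le_two]
    field_simp
  rw [klDivPos_expPdf_halfNormalPdf hβ (by positivity), hs]
  norm_num

/-- for every `β > 0`, the infimum over `σ > 0` of
`D_KL(exponential(β) ‖ halfNormal(σ))` equals `(log π − 1)/2` (hence does not depend on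
`β`), and it is attained at `σ = β√2`. -/
theorem inf_kl_exponential_halfNormal (β : ℝ) (hβ : 0 < β) :
    sInf {d : ℝ | ∃ σ : ℝ, 0 < σ ∧ d = klDivPos (expPdf β) (halfNormalPdf σ)} =
        (Real.log Real.pi - 1) / 2 ∧
      klDivPos (expPdf β) (halfNormalPdf (β * Real.sqrt 2)) =
        (Real.log Real.pi - 1) / 2 := by
  have hmin := klDivPos_expPdf_halfNormalPdf_mul_sqrt_two hβ
  refine ⟨IsLeast.csInf_eq ⟨⟨β * √2, by positivity, hmin.symm⟩, ?_⟩, hmin⟩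
  rintro d ⟨σ, hσ, rfl⟩
  exact le_klDivPos_expPdf_halfNormalPdf hβ hσ
end

section
/- Let h1 and h2 be probability density functions on ℝ, and for θ = (a, b) ∈ Θ = ℝ × (0, ∞) define f_i(x; θ) = b⁻¹ h_i((x − a)/b) for i = 1, 2. Let c = inf_{θ2 ∈ Θ} D_KL(h1 ‖ f2(·; θ2)). Then for every probability measure π1 on Θ (a prior for the parameters of model M1), the expected loss ∫_Θ [inf_{θ2 ∈ Θ} D_KL(f1(·; θ1) ‖ f2(·; θ2))] π1(dθ1) equals c; in particular the model prior P(M1) ∝ exp{∫_Θ inf_{θ2} D_KL(f1(·; θ1) ‖ f2(·; θ2)) π1(dθ1)} = exp(c) does not depend on the choice of the prior π1. -/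
open MeasureTheory Real

/-- Kullback--Leibler divergence between two densities on ℝ (w.r.t. Lebesgue measure). -/
noncomputable def klDiv (f g : ℝ → ℝ) : ℝ :=
  ∫ x, f x * Real.log (f x / g x)

/-- A location-scale density with reduced density `h`, location `θ.1` and scale `θ.2`. -/
noncomputable def lsPdf (h : ℝ → ℝ) (θ : ℝ × ℝ) (x : ℝ) : ℝ :=
  θ.2⁻¹ * h ((x - θ.1) / θ.2)

/-- The minimal Kullback--Leibler loss incurred by choosing model 2 (with reduced
density `h2`) when the true model is the location-scale density `lsPdf h1 θ1`. -/
noncomputable def minLoss (h1 : ℝ → ℝ) (h2 : ℝ → ℝ) (θ1 : ℝ × ℝ) : ℝ :=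
  sInf {d : ℝ | ∃ θ2 : ℝ × ℝ, 0 < θ2.2 ∧ d = klDiv (lsPdf h1 θ1) (lsPdf h2 θ2)}

/-!
The parameters `θ = (a, b)` act on ℝ by the affine maps `x ↦ a + b x`, and `lsPdf h θ` is the
law of `a + b X` for `X ∼ h`. Transporting both densities by the inverse of `θ1` preserves the
Kullback--Leibler divergence (a change of variables), so the loss from `lsPdf h1 θ1` to
`lsPdf h2 (affineMul θ1 θ)` equals the loss from `h1` to `lsPdf h2 θ`. As `affineMul θ1`
permutes the half-plane `b > 0`, `minLoss h1 h2 θ1` is the constant `c` for every admissible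
`θ1`, and so is its mean under any prior carried by that half-plane.
-/

/-- Composition of the affine maps `x ↦ θ.1 + θ.2 * x`. -/
def affineMul (θ₁ θ : ℝ × ℝ) : ℝ × ℝ :=
  (θ₁.1 + θ₁.2 * θ.1, θ₁.2 * θ.2)

lemma lsPdf_affineMul (h : ℝ → ℝ) {θ₁ : ℝ × ℝ} (hθ₁ : θ₁.2 ≠ 0) (θ : ℝ × ℝ) (x : ℝ) :
    lsPdf h (affineMul θ₁ θ) x = θ₁.2⁻¹ * lsPdf h θ ((x - θ₁.1) / θ₁.2) := by
  simp only [lsPdf, affineMul, mul_inv, mul_assoc]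
  congr 3
  field_simp
  ring

lemma integral_lsPdf (g : ℝ → ℝ) {θ : ℝ × ℝ} (hθ : 0 < θ.2) :
    ∫ x, lsPdf g θ x = ∫ x, g x := by
  unfold lsPdf
  rw [integral_const_mul, integral_sub_right_eq_self (fun y => g (y / θ.2)),
    Measure.integral_comp_div, abs_of_pos hθ, smul_eq_mul, inv_mul_cancel_left₀ hθ.ne']

lemma klDiv_lsPdf_affineMul (h1 h2 : ℝ → ℝ) {θ₁ : ℝ × ℝ} (hθ₁ : 0 < θ₁.2) (θ : ℝ × ℝ) :
    klDiv (lsPdf h1 θ₁) (lsPdf h2 (affineMul θ₁ θ)) = klDiv h1 (lsPdf h2 θ) := by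
  have hb : θ₁.2⁻¹ ≠ 0 := inv_ne_zero hθ₁.ne'
  calc klDiv (lsPdf h1 θ₁) (lsPdf h2 (affineMul θ₁ θ))
      = ∫ x, lsPdf (fun y => h1 y * Real.log (h1 y / lsPdf h2 θ y)) θ₁ x := by
        unfold klDiv
        congr 1 with x
        rw [lsPdf_affineMul h2 hθ₁.ne']
        simp only [lsPdf]
        rw [mul_div_mul_left _ _ hb, mul_assoc]
    _ = klDiv h1 (lsPdf h2 θ) := integral_lsPdf _ hθ₁

lemma minLoss_eq_of_pos (h1 h2 : ℝ → ℝ) {θ₁ : ℝ × ℝ} (hθ₁ : 0 < θ₁.2) :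
    minLoss h1 h2 θ₁ = sInf {d : ℝ | ∃ θ : ℝ × ℝ, 0 < θ.2 ∧ d = klDiv h1 (lsPdf h2 θ)} := by
  unfold minLoss
  congr 1 with d
  constructor
  · rintro ⟨θ₂, hθ₂, rfl⟩
    have hθ : affineMul θ₁ ((θ₂.1 - θ₁.1) / θ₁.2, θ₂.2 / θ₁.2) = θ₂ := by
      ext <;> simp only [affineMul] <;> field_simp; ring
    exact ⟨_, div_pos hθ₂ hθ₁, by rw [← klDiv_lsPdf_affineMul h1 h2 hθ₁, hθ]⟩
  · rintro ⟨θ, hθ, rfl⟩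
    exact ⟨affineMul θ₁ θ, mul_pos hθ₁ hθ, (klDiv_lsPdf_affineMul h1 h2 hθ₁ θ).symm⟩

theorem expected_minLoss_const_of_locationScale_general
    (h1 h2 : ℝ → ℝ)
    (c : ℝ)
    (hc : c = sInf {d : ℝ | ∃ θ2 : ℝ × ℝ, 0 < θ2.2 ∧ d = klDiv h1 (lsPdf h2 θ2)})
    (π1 : Measure (ℝ × ℝ)) [IsProbabilityMeasure π1]
    (hπ1 : π1 {θ : ℝ × ℝ | ¬ 0 < θ.2} = 0) :
    (∫ θ1, minLoss h1 h2 θ1 ∂π1) = c ∧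
      Real.exp (∫ θ1, minLoss h1 h2 θ1 ∂π1) = Real.exp c := by
  have hae : (fun θ1 => minLoss h1 h2 θ1) =ᵐ[π1] fun _ => c := by
    filter_upwards [ae_iff.mpr hπ1] with θ1 hθ1
    rw [hc, minLoss_eq_of_pos h1 h2 hθ1]
  have hint : (∫ θ1, minLoss h1 h2 θ1 ∂π1) = c := by
    rw [integral_congr_ae hae, integral_const, probReal_univ, one_smul]
  exact ⟨hint, congrArg Real.exp hint⟩

/-- for location-scale models, the expected loss
`∫ inf_{θ2} D_KL(f1(·; θ1) ‖ f2(·; θ2)) π1(dθ1)` equals the constant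
`c = inf_{θ2} D_KL(h1 ‖ f2(·; θ2))` for every prior `π1` on `Θ = ℝ × (0, ∞)`; hence the
Villa--Walker model prior `P(M1) ∝ exp{expected loss} = exp c` does not depend on `π1`. -/
theorem expected_minLoss_const_of_locationScale
    (h1 h2 : ℝ → ℝ) (hm1 : Measurable h1) (hm2 : Measurable h2)
    (h1nn : ∀ x, 0 ≤ h1 x) (h2nn : ∀ x, 0 ≤ h2 x)
    (h1int : ∫ x, h1 x = 1) (h2int : ∫ x, h2 x = 1)
    (c : ℝ)
    (hc : c = sInf {d : ℝ | ∃ θ2 : ℝ × ℝ, 0 < θ2.2 ∧ d = klDiv h1 (lsPdf h2 θ2)})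
    (π1 : Measure (ℝ × ℝ)) [IsProbabilityMeasure π1]
    (hπ1 : π1 {θ : ℝ × ℝ | ¬ 0 < θ.2} = 0) :
    (∫ θ1, minLoss h1 h2 θ1 ∂π1) = c ∧
      Real.exp (∫ θ1, minLoss h1 h2 θ1 ∂π1) = Real.exp c :=
  expected_minLoss_const_of_locationScale_general h1 h2 c hc π1 hπ1
end
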